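/- arXiv:0903.0068 — 6 statements merged into one kernel-verified Lean document; each statement's English description precedes it below -/
import Mathlib

section
/- Let Λ be uncountable and for each λ ∈ Λ let G_λ be a finite subset of Λ with λ ∉ G_λ. Then for every n there exists a finite set F ⊆ Λ with |F| = n+1 such that for all distinct λ, μ ∈ F, λ ∉ G_μ. Consequently, the intersection of the basic neighborhoods Φ_{{λ}}^{G_λ} of the singletons {λ}, λ ∈ F, in σ_{n+1}(Λ) is nonempty (it contains F itself). -/
/-! Call `F` free if `l ∉ G m` for all distinct `l, m ∈ F`. Inside an uncountable `S` some `a ∈ S`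
lies outside `G l` for uncountably many `l ∈ S`: otherwise, for a countably infinite `T ⊆ S`, all
but countably many `l ∈ S` would have `T ⊆ G l`, against the finiteness of `G l`. Keeping those `l`,
minus the finite set `insert a (G a)`, leaves an uncountable set in which every free set extends
by `a`; induction gives free sets of every finite size. -/

def sigmaSet (Γ : Type*) (n : ℕ) : Set (Γ → Bool) :=
  {x | {γ | x γ = true}.Finite ∧ {γ | x γ = true}.ncard ≤ n}

open Set

theorem decide_mem_mem_sigmaSet_iff {Γ : Type*} [DecidableEq Γ] (F : Finset Γ) (n : ℕ) :
    (fun γ => decide (γ ∈ F)) ∈ sigmaSet Γ n ↔ F.card ≤ n := by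
  simp [sigmaSet]

section FreeSets

variable {Λ : Type*} (G : Λ → Finset Λ)

theorem exists_mem_not_countable_setOf_notMem {S : Set Λ} (hS : ¬ S.Countable) :
    ∃ a ∈ S, ¬ {l ∈ S | a ∉ G l}.Countable := by
  by_contra! h
  obtain ⟨T, hTS, hTc, hTinf⟩ :=
    Set.Infinite.exists_subset_countable_infinite fun hf : S.Finite => hS hf.countable
  have hU : (⋃ a ∈ T, {l ∈ S | a ∉ G l}).Countable := hTc.biUnion fun a ha => h a (hTS ha)
  obtain ⟨l, hlS, hlU⟩ : (S \ ⋃ a ∈ T, {l ∈ S | a ∉ G l}).Nonempty :=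
    nonempty_iff_ne_empty.2 fun he => hS (hU.mono (sdiff_eq_empty.1 he))
  have hTG : T ⊆ G l := fun a ha => by_contra fun hal => hlU (mem_biUnion ha ⟨hlS, hal⟩)
  exact hTinf ((G l).finite_toSet.subset hTG)

theorem exists_finset_pairwise_notMem_of_not_countable {S : Set Λ} (hS : ¬ S.Countable) (m : ℕ) :
    ∃ F : Finset Λ, ↑F ⊆ S ∧ F.card = m ∧ (F : Set Λ).Pairwise fun l p => l ∉ G p := by
  classical
  induction m generalizing S with
  | zero => exact ⟨∅, by simp⟩
  | succ m ih =>
    obtain ⟨a, haS, ha⟩ := exists_mem_not_countable_setOf_notMem G hS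
    set S' := {l ∈ S | a ∉ G l} \ insert a ↑(G a)
    have hS' : ¬ S'.Countable := fun hc =>
      ha ((hc.union ((G a).countable_toSet.insert a)).mono (by
        rw [sdiff_union_self]
        exact subset_union_left))
    obtain ⟨F, hFS', hFcard, hFfree⟩ := ih hS'
    have haF : a ∉ F := fun h => (hFS' h).2 (mem_insert a _)
    refine ⟨insert a F, ?_, by rw [Finset.card_insert_of_notMem haF, hFcard], ?_⟩
    · rw [Finset.coe_insert]
      exact insert_subset haS fun l hl => (hFS' hl).1.1
    · rw [Finset.coe_insert, pairwise_insert]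
      exact ⟨hFfree, fun l hl _ => ⟨(hFS' hl).1.2, fun h => (hFS' hl).2 (Or.inr h)⟩⟩

end FreeSets

/-- Given an uncountable `Λ` and finite sets `G_λ ⊆ Λ` with `λ ∉ G_λ`, for every `n` there is
`F ⊆ Λ` with `|F| = n+1` such that `λ ∉ G_μ` for distinct `λ, μ ∈ F`; consequently the
characteristic function of `F` lies in `σ_{n+1}(Λ)` and in every `Φ_{{λ}}^{G_λ}`, `λ ∈ F`. -/
theorem stmt_5 (Λ : Type*) [Uncountable Λ] [DecidableEq Λ]
    (G : Λ → Finset Λ) (hG : ∀ l, l ∉ G l) (n : ℕ) :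
    ∃ F : Finset Λ, F.card = n + 1 ∧
      (∀ l ∈ F, ∀ m ∈ F, l ≠ m → l ∉ G m) ∧
      (fun γ => decide (γ ∈ F)) ∈ sigmaSet Λ (n + 1) ∧
      (∀ l ∈ F, decide (l ∈ F) = true ∧ ∀ γ ∈ G l, decide (γ ∈ F) = false) := by
  obtain ⟨F, -, hFcard, hFfree⟩ :=
    exists_finset_pairwise_notMem_of_not_countable G not_countable_univ (n + 1)
  refine ⟨F, hFcard, hFfree, (decide_mem_mem_sigmaSet_iff F _).2 hFcard.le,
    fun l hl => ⟨decide_eq_true hl, fun γ hγ => decide_eq_false fun hγF => ?_⟩⟩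
  rcases eq_or_ne γ l with rfl | hne
  · exact hG γ hγ
  · exact hFfree hγF hl hne hγ
end

section
/- For an uncountable set Λ, the space σ_{n+1}(Λ) does not embed topologically into σ_n(Γ)^ω for any set Γ. -/
/-!
Let `f : σ_{n+1}(Λ) → σ_n(Γ)^ω` be a continuous injection. Each singleton indicator `e_l` is
separated from `0` by some coordinate `(k, γ)`, and by continuity at `0` a given coordinate
separates only finitely many `e_l` from `0`. Hence for uncountably many `l` one `k₀` works, the
`γ l` are finite-to-one, and `f(e_l)_{k₀}(γ l) = 1 ≠ f(0)_{k₀}(γ l)`. Continuity at `e_l` gives a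
finite set `F l` on which any `y` agreeing with `e_l` keeps this value. A free-set lemma for set
mappings on uncountable sets yields `n + 1` of these `l`, none lying in another's `F l` or
`γ`-fiber; for the indicator `y` of these points, `f(y)_{k₀}` has `n + 1` distinct ones.
-/

open Set Function Topology

theorem exists_finset_forall_eq_of_continuous {ι β : Type*} {π : ι → Type*}
    [∀ i, TopologicalSpace (π i)] [TopologicalSpace β] [DiscreteTopology β]
    {s : Set (∀ i, π i)} {g : s → β} (hg : Continuous g) (x : s) :
    ∃ I : Finset ι, ∀ y : s, (∀ i ∈ I, y.1 i = x.1 i) → g y = g x := by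
  have hx : g ⁻¹' {g x} ∈ 𝓝 x := hg.continuousAt (isOpen_discrete {g x} |>.mem_nhds rfl)
  obtain ⟨u, hu, hus⟩ := (mem_nhds_subtype s x _).1 hx
  rw [nhds_pi, Filter.mem_pi'] at hu
  obtain ⟨I, t, ht, hIt⟩ := hu
  exact ⟨I, fun y hy => hus (hIt fun i hi => hy i hi ▸ mem_of_mem_nhds (ht i))⟩

theorem exists_not_countable_fiber {α β : Type*} [Countable β] {S : Set α} (hS : ¬ S.Countable)
    (g : α → β) : ∃ b, ¬ {a ∈ S | g a = b}.Countable := by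
  by_contra! h
  exact hS <| (countable_iUnion h).mono fun a ha =>
    mem_iUnion.2 ⟨g a, show a ∈ S ∧ g a = g a from ⟨ha, rfl⟩⟩

section FreeSet

variable {Λ : Type*}

theorem exists_finset_pairwise_notMem_of_countable_fibers {S : Set Λ} (hS : ¬ S.Countable)
    {F : Λ → Finset Λ} (hfib : ∀ x, {a ∈ S | x ∈ F a}.Countable) (m : ℕ) :
    ∃ T : Finset Λ, ↑T ⊆ S ∧ T.card = m ∧ (T : Set Λ).Pairwise fun a b => a ∉ F b := by
  classical
  induction m with
  | zero => exact ⟨∅, by simp⟩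
  | succ m ih =>
    obtain ⟨T, hTS, hTcard, hTfree⟩ := ih
    set Bad : Set Λ := ↑T ∪ ⋃ b ∈ T, (↑(F b) ∪ {a ∈ S | b ∈ F a})
    have hBad : Bad.Countable :=
      T.countable_toSet.union <| T.countable_toSet.biUnion fun b _ =>
        (F b).countable_toSet.union (hfib b)
    obtain ⟨x, hxS, hxBad⟩ : (S \ Bad).Nonempty :=
      nonempty_iff_ne_empty.2 fun h => hS <| hBad.mono (sdiff_eq_empty.1 h)
    have hxT : x ∉ T := fun hx => hxBad (Or.inl hx)
    refine ⟨insert x T, ?_, by rw [Finset.card_insert_of_notMem hxT, hTcard], ?_⟩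
    · simpa [insert_subset_iff] using ⟨hxS, hTS⟩
    · rw [Finset.coe_insert, pairwise_insert]
      refine ⟨hTfree, fun b hb _ => ⟨fun hxb => ?_, fun hbx => ?_⟩⟩
      · exact hxBad (Or.inr (mem_biUnion hb (Or.inl hxb)))
      · exact hxBad (Or.inr (mem_biUnion hb (Or.inr ⟨hxS, hbx⟩)))

theorem exists_finset_pairwise_notMem_of_card_le (m k : ℕ) {S : Set Λ} (hS : ¬ S.Countable)
    {F : Λ → Finset Λ} (hF : ∀ a ∈ S, (F a).card ≤ k) :
    ∃ T : Finset Λ, ↑T ⊆ S ∧ T.card = m ∧ (T : Set Λ).Pairwise fun a b => a ∉ F b := by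
  classical
  induction k generalizing S F with
  | zero =>
    refine exists_finset_pairwise_notMem_of_countable_fibers hS (fun x => ?_) m
    convert countable_empty
    exact eq_empty_of_forall_notMem fun a ⟨ha, hx⟩ =>
      Finset.card_ne_zero_of_mem hx (Nat.le_zero.1 (hF a ha))
  | succ k ih =>
    by_cases hfib : ∀ x, {a ∈ S | x ∈ F a}.Countable
    · exact exists_finset_pairwise_notMem_of_countable_fibers hS hfib m
    obtain ⟨x, hx⟩ := not_forall.1 hfib
    -- uncountably many `F a` share the point `x`; deleting it lowers the bound on `#(F a)`
    have hS' : ¬ ({a ∈ S | x ∈ F a} \ {x}).Countable := fun h =>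
      hx (h.of_sdiff (countable_singleton x))
    obtain ⟨T, hTS, hTcard, hTfree⟩ := ih hS' (F := fun a => (F a).erase x) fun a ha => by
      rw [Finset.card_erase_of_mem ha.1.2]
      exact Nat.sub_le_of_le_add (hF a ha.1.1)
    refine ⟨T, fun a ha => (hTS ha).1.1, hTcard, hTfree.imp_on fun a ha b _ _ hab hFb => ?_⟩
    exact hab (Finset.mem_erase.2 ⟨(hTS ha).2, hFb⟩)

theorem exists_finset_pairwise_notMem {S : Set Λ} (hS : ¬ S.Countable) (F : Λ → Finset Λ)
    (m : ℕ) :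
    ∃ T : Finset Λ, ↑T ⊆ S ∧ T.card = m ∧ (T : Set Λ).Pairwise fun a b => a ∉ F b := by
  obtain ⟨k, hk⟩ := exists_not_countable_fiber hS fun a => (F a).card
  obtain ⟨T, hTS, hTcard, hTfree⟩ :=
    exists_finset_pairwise_notMem_of_card_le m k hk fun a ha => ha.2.le
  exact ⟨T, fun a ha => (hTS ha).1, hTcard, hTfree⟩

end FreeSet

namespace sigmaSet

variable {Λ Γ : Type*} {n : ℕ}

def ofFinset [DecidableEq Λ] (T : Finset Λ) (hT : T.card ≤ n) : sigmaSet Λ n :=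
  ⟨fun μ => decide (μ ∈ T), by
    have hsupp : {μ | decide (μ ∈ T) = true} = ↑T := by ext; simp
    exact ⟨hsupp ▸ T.finite_toSet, by rw [hsupp, ncard_coe_finset]; exact hT⟩⟩

def single [DecidableEq Λ] (l : Λ) : sigmaSet Λ (n + 1) :=
  ofFinset {l} (by simp)

theorem card_le_of_injOn {x : Γ → Bool} (hx : x ∈ sigmaSet Γ n) {γ : Λ → Γ} {T : Finset Λ}
    (hγ : InjOn γ T) (hT : ∀ l ∈ T, x (γ l) = true) : T.card ≤ n := by
  calc T.card ≤ hx.1.toFinset.card :=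
        Finset.card_le_card_of_injOn γ (fun l hl => by simpa using hT l hl) hγ
    _ = {γ | x γ = true}.ncard := (ncard_eq_toFinset_card _ hx.1).symm
    _ ≤ n := hx.2

end sigmaSet

section Embedding

open sigmaSet

variable {Λ Γ : Type*} {n : ℕ} {f : sigmaSet Λ (n + 1) → ℕ → sigmaSet Γ n}

theorem continuous_coord (hf : Continuous f) (k : ℕ) (γ : Γ) :
    Continuous fun x => (f x k).1 γ :=
  (continuous_apply γ).comp (continuous_subtype_val.comp ((continuous_apply k).comp hf))

theorem exists_coord_true_on_singletons [DecidableEq Λ] [Uncountable Λ] (hf : Continuous f)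
    (hinj : Injective f) :
    ∃ (k₀ : ℕ) (γ : Λ → Γ) (S : Set Λ), ¬ S.Countable ∧ (∀ γ₀, {l ∈ S | γ l = γ₀}.Finite) ∧
      ∀ l ∈ S, (f (single l) k₀).1 (γ l) = true := by
  set x₀ : sigmaSet Λ (n + 1) := ofFinset ∅ (by simp)
  have hsep : ∀ l, ∃ k γ, (f (single l) k).1 γ ≠ (f x₀ k).1 γ := fun l => by
    have hne : single l ≠ x₀ := fun h => by
      simpa [x₀, single, ofFinset] using congrArg (fun x : sigmaSet Λ (n + 1) => x.1 l) h
    simpa [funext_iff, Subtype.ext_iff] using hinj.ne hne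
  choose k γ hkγ using hsep
  choose F₀ hF₀ using fun k γ =>
    exists_finset_forall_eq_of_continuous (continuous_coord hf k γ) x₀
  -- `single l` differs from `x₀` only at `l`, yet `f` separates them in coordinate `(k l, γ l)`
  have hmem : ∀ l, l ∈ F₀ (k l) (γ l) := fun l => by
    by_contra hl
    refine hkγ l (hF₀ _ _ _ fun μ hμ => ?_)
    simp [x₀, single, ofFinset, ne_of_mem_of_not_mem hμ hl]
  obtain ⟨k₀, hk₀⟩ := exists_not_countable_fiber not_countable_univ k
  set B := ⋃ γ₀ ∈ {γ₀ | (f x₀ k₀).1 γ₀ = true}, (F₀ k₀ γ₀ : Set Λ)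
  have hB : B.Finite := (f x₀ k₀).2.1.biUnion fun γ₀ _ => (F₀ k₀ γ₀).finite_toSet
  refine ⟨k₀, γ, {l ∈ univ | k l = k₀} \ B, fun h => hk₀ (h.of_sdiff hB.countable), ?_, ?_⟩
  · refine fun γ₀ => (F₀ k₀ γ₀).finite_toSet.subset ?_
    rintro l ⟨⟨⟨-, hl⟩, -⟩, rfl⟩
    exact hl ▸ hmem l
  · rintro l ⟨⟨-, hl⟩, hlB⟩
    have hx₀ : (f x₀ k₀).1 (γ l) = false := by
      by_contra h
      exact hlB (mem_biUnion (Bool.not_eq_false _ ▸ h) (hl ▸ hmem l))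
    simpa [hl, hx₀] using hkγ l

end Embedding

/-- For uncountable `Λ`, the space `σ_{n+1}(Λ)` does not embed into `σ_n(Γ)^ω` for any `Γ`. -/
theorem stmt_6 (Λ : Type*) [Uncountable Λ] (Γ : Type*) (n : ℕ) :
    ∀ f : (sigmaSet Λ (n + 1)) → (ℕ → (sigmaSet Γ n)),
      Continuous f → ¬ Function.Injective f := by
  intro f hf hinj
  classical
  obtain ⟨k₀, γ, S, hS, hfib, hsep⟩ := exists_coord_true_on_singletons hf hinj
  choose F hF using fun l =>
    exists_finset_forall_eq_of_continuous (continuous_coord hf k₀ (γ l)) (sigmaSet.single l)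
  obtain ⟨T, hTS, hTcard, hTfree⟩ :=
    exists_finset_pairwise_notMem hS (fun l => F l ∪ (hfib (γ l)).toFinset) (n + 1)
  set y := sigmaSet.ofFinset T hTcard.le
  have hy : ∀ l ∈ T, (f y k₀).1 (γ l) = true := fun l hl => by
    refine (hF l y fun μ hμ => ?_).trans (hsep l (hTS hl))
    by_cases hμl : μ = l
    · simp [y, sigmaSet.single, sigmaSet.ofFinset, hμl, hl]
    · have hμT : μ ∉ T := fun hμT => hTfree hμT hl hμl (Finset.mem_union_left _ hμ)
      simp [y, sigmaSet.single, sigmaSet.ofFinset, hμl, hμT]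
  have hγ : InjOn γ T := fun a ha b hb hab => by
    by_contra hne
    exact hTfree ha hb hne (Finset.mem_union_right _ (by simpa [hab] using hTS ha))
  have := sigmaSet.card_le_of_injOn (f y k₀).2 hγ hy
  omega
end

section
/- For an uncountable set Λ and integers n ≥ 0, k ≥ 0, the space σ_{n+1}(Λ)^{k+1} does not embed topologically into σ_n(Γ)^ω × σ_{n+1}(Γ)^k. -/
/-!
For each factor `i` of the domain and `l ∈ Λ`, injectivity separates the point `{l}` in factor
`i` from the empty point at some coordinate `(c, γ)` of the codomain, and continuity at the empty
point lets each coordinate separate only finitely many `l`. Hence there are a codomain factor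
`c`, uncountably many `γ ∈ Γ` and distinct `a γ ∈ Λ` such that `f ({a γ} in factor i)` contains
`γ` in factor `c`; by continuity this persists as long as the input is unchanged on a finite set
`G γ`. A free-set argument over the uncountable families picks `γ₁, …, γᵣ` with `a γₛ ∉ G γₜ`
for `s ≠ t`, so that the union of the inputs `{a γₜ}` is sent to a point containing all `γₜ`
in factor `c`. If some factor `i` gets a coordinate `c` of `σ_n(Γ)`, take `r = n + 1` points
from factor `i`. Otherwise, as there are only `k` factors `σ_{n+1}(Γ)`, two factors `i ≠ i'` get
the same `c` and `n + 1` points from `i` plus one from `i'` overflow `σ_{n+1}(Γ)`.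
-/

open Set Function Topology

theorem Continuous.exists_finset_forall_apply_eq {ι α β : Type*} [TopologicalSpace β]
    [DiscreteTopology β] {S : ι → Set (α → Bool)} {g : (∀ i, S i) → β} (hg : Continuous g)
    (x : ∀ i, S i) :
    ∃ G : Finset (ι × α), ∀ y, (∀ p ∈ G, (y p.1 : α → Bool) p.2 = (x p.1 : α → Bool) p.2) →
      g y = g x := by
  set e : (∀ i, S i) → ι × α → Bool := fun y p => (y p.1 : α → Bool) p.2
  have he : IsInducing e :=
    Homeomorph.piCurry.symm.isInducing.comp (IsInducing.piMap fun _ => IsInducing.subtypeVal)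
  obtain ⟨V, hV, hgV⟩ := he.isOpen_iff.1 ((isOpen_discrete {g x}).preimage hg)
  have hxV : V ∈ 𝓝 (e x) := hV.mem_nhds (show x ∈ e ⁻¹' V by rw [hgV]; rfl)
  rw [nhds_pi, Filter.mem_pi] at hxV
  obtain ⟨I, hI, t, ht, hIt⟩ := hxV
  refine ⟨hI.toFinset, fun y hy => ?_⟩
  have hyV : y ∈ e ⁻¹' V := hIt fun p hp => by
    rw [show e y p = e x p from hy p (hI.mem_toFinset.2 hp)]
    exact mem_of_mem_nhds (ht p)
  rwa [hgV] at hyV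

theorem exists_injective_free_selection {X Y : Type*} :
    ∀ {r : ℕ} (P : Fin r → Set X) (φ : Fin r → X → Y) (G : Fin r → X → Finset Y),
      (∀ j, ¬ (P j).Countable) → (∀ j, InjOn (φ j) (P j)) →
      ∃ x : Fin r → X, Injective x ∧ (∀ j, x j ∈ P j) ∧
        ∀ s t, s ≠ t → φ s (x s) ∉ G t (x t)
  | 0, _, _, _, _, _ => ⟨finZeroElim, fun s => s.elim0, fun s => s.elim0, fun s => s.elim0⟩
  | r + 1, P, φ, G, hP, hφ => by
    -- The first point is picked from a countable subfamily `c` of `P 0`; the remaining points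
    -- avoid `c` and all the sets `G 0 (c q)`, and all but finitely many `c q` are then free.
    let c : ℕ ↪ P 0 := Set.Infinite.natEmbedding _ fun h => hP 0 h.countable
    let W : Set Y := ⋃ q, (G 0 (c q) : Set Y)
    let P' : Fin r → Set X := fun j => P j.succ \ (φ j.succ ⁻¹' W ∪ range (fun q => (c q : X)))
    have hP' : ∀ j, ¬ (P' j).Countable := by
      intro j hj
      have hW : (P j.succ ∩ φ j.succ ⁻¹' W).Countable :=
        ((mapsTo_preimage _ _).mono_left inter_subset_right).countable_of_injOn
          ((hφ j.succ).mono inter_subset_left)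
          (countable_iUnion fun q => (G 0 (c q)).countable_toSet)
      refine hP j.succ ((hj.union (hW.union (countable_range fun q => (c q : X)))).mono ?_)
      intro y hy
      simp only [P', mem_union, mem_sdiff, mem_inter_iff, mem_preimage]
      tauto
    obtain ⟨x, hx, hxP, hxfree⟩ := exists_injective_free_selection P' (fun j => φ j.succ)
      (fun j => G j.succ) hP' fun j => (hφ j.succ).mono sdiff_subset
    have hc : Injective fun q => φ 0 (c q) :=
      fun q q' h => c.injective (Subtype.ext (hφ 0 (c q).2 (c q').2 h))
    have hbad : {q | φ 0 (c q) ∈ ⋃ t, (G t.succ (x t) : Set Y)}.Finite :=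
      (finite_iUnion fun t => (G t.succ (x t)).finite_toSet).preimage hc.injOn
    obtain ⟨q, hq⟩ := hbad.infinite_compl.nonempty
    refine ⟨Fin.cons (c q) x, Fin.cons_injective_iff.2 ⟨?_, hx⟩,
      Fin.cases (c q).2 fun t => by simpa using (hxP t).1, ?_⟩
    · rintro ⟨t, ht⟩
      exact (hxP t).2 (Or.inr ⟨q, ht.symm⟩)
    · intro s t hst
      cases s using Fin.cases <;> cases t using Fin.cases
      · exact absurd rfl hst
      · exact fun h => hq (mem_iUnion.2 ⟨_, h⟩)
      · exact fun h => (hxP _).2 (Or.inl (mem_iUnion.2 ⟨q, h⟩))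
      · exact hxfree _ _ fun h => hst (congrArg Fin.succ h)

theorem exists_not_countable_setOf_mem_range {α κ Γ : Type*} [Uncountable α] [Countable κ]
    (w : α → κ × Γ) (hw : ∀ v, (w ⁻¹' {v}).Countable) :
    ∃ c, ¬ {γ | (c, γ) ∈ range w}.Countable := by
  by_contra! h
  have hrange : (range w).Countable := by
    refine (countable_iUnion fun c => (h c).image (Prod.mk c)).mono ?_
    rintro ⟨c, γ⟩ hv
    exact mem_iUnion_of_mem c ⟨γ, hv, rfl⟩
  have huniv := hrange.biUnion fun v _ => hw v
  rw [biUnion_preimage_singleton, preimage_range, countable_univ_iff] at huniv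
  exact not_countable huniv

namespace SigmaSet

variable {ι Λ Γ κ : Type*} {n : ℕ}

theorem card_le_of_forall_apply_eq_true {m : ℕ} {x : Γ → Bool} (hx : x ∈ sigmaSet Γ m) {r : ℕ}
    {y : Fin r → Γ} (hy : Injective y) (h : ∀ j, x (y j) = true) : r ≤ m :=
  calc r = (range y).ncard := by rw [ncard_range_of_injective hy, Nat.card_fin]
    _ ≤ {γ | x γ = true}.ncard := ncard_le_ncard (range_subset_iff.2 h) hx.1
    _ ≤ m := hx.2

open Classical in
noncomputable def ofSet (S : Set (ι × Λ)) (hS : S.Finite)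
    (h : ∀ i, {l | (i, l) ∈ S}.ncard ≤ n + 1) : ι → sigmaSet Λ (n + 1) :=
  fun i => ⟨fun l => decide ((i, l) ∈ S), by
    simpa [sigmaSet] using ⟨hS.preimage (Prod.mk_right_injective i).injOn, h i⟩⟩

@[simp]
theorem ofSet_apply {S : Set (ι × Λ)} {hS : S.Finite} {h : ∀ i, {l | (i, l) ∈ S}.ncard ≤ n + 1}
    {i : ι} {l : Λ} : (ofSet S hS h i : Λ → Bool) l = true ↔ (i, l) ∈ S := by
  simp [ofSet]

noncomputable def empty : ι → sigmaSet Λ (n + 1) := ofSet ∅ finite_empty fun _ => by simp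

noncomputable def single (i : ι) (l : Λ) : ι → sigmaSet Λ (n + 1) :=
  ofSet {(i, l)} (finite_singleton _) fun _ => by
    refine (ncard_le_ncard (t := {l}) (fun _ h => ?_) (finite_singleton l)).trans (by simp)
    exact (Prod.ext_iff.1 (mem_singleton_iff.1 h)).2

@[simp]
theorem empty_apply {i : ι} {l : Λ} : (empty i : sigmaSet Λ (n + 1)).1 l = false := by
  simp [empty, ofSet]

@[simp]
theorem single_apply {i i' : ι} {l l' : Λ} :
    (single i l i' : sigmaSet Λ (n + 1)).1 l' = true ↔ (i', l') = (i, l) := by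
  rw [single, ofSet_apply, mem_singleton_iff]

theorem single_ne_empty (i : ι) (l : Λ) : (single i l : ι → sigmaSet Λ (n + 1)) ≠ empty := by
  intro h
  simpa [h] using (single_apply (n := n)).2 (rfl : (i, l) = (i, l))

theorem finite_setOf_apply_single_ne {β : Type*} [TopologicalSpace β] [DiscreteTopology β]
    {g : (ι → sigmaSet Λ (n + 1)) → β} (hg : Continuous g) (i : ι) :
    {l | g (single i l) ≠ g empty}.Finite := by
  obtain ⟨G, hG⟩ := hg.exists_finset_forall_apply_eq empty
  refine (G.finite_toSet.image Prod.snd).subset fun l hl => ?_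
  by_contra hlG
  refine hl (hG _ fun p hp => ?_)
  rw [empty_apply, Bool.eq_false_iff]
  intro hpl
  exact hlG ⟨p, hp, (Prod.ext_iff.1 (single_apply.1 hpl)).2⟩

structure WitnessFamily (F : (ι → sigmaSet Λ (n + 1)) → κ → Γ → Bool) (i : ι) where
  coord : κ
  points : Set Γ
  label : Γ → Λ
  not_countable : ¬ points.Countable
  injOn_label : InjOn label points
  apply_single : ∀ γ ∈ points, F (single i (label γ)) coord γ = true

theorem nonempty_witnessFamily [Uncountable Λ] [Countable κ]
    {F : (ι → sigmaSet Λ (n + 1)) → κ → Γ → Bool} (hF : Continuous F) (hinj : Injective F)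
    (hfin : ∀ z c, {γ | F z c γ = true}.Finite) (i : ι) : Nonempty (WitnessFamily F i) := by
  have hne : ∀ l, ∃ v : κ × Γ, F (single i l) v.1 v.2 ≠ F empty v.1 v.2 := by
    intro l
    by_contra! h
    exact single_ne_empty i l (hinj (funext₂ fun c γ => h (c, γ)))
  choose w hw using hne
  have hfib : ∀ v, (w ⁻¹' {v}).Countable := fun v =>
    (finite_setOf_apply_single_ne (show Continuous fun z => F z v.1 v.2 by fun_prop) i
      |>.subset fun l (hl : w l = v) => hl ▸ hw l).countable
  obtain ⟨c, hc⟩ := exists_not_countable_setOf_mem_range w hfib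
  let P := {γ | (c, γ) ∈ range w} \ {γ | F empty c γ = true}
  have hP : ¬ P.Countable := fun h =>
    hc ((h.union (hfin empty c).countable).mono (subset_sdiff_union _ _))
  choose! a ha using fun γ (hγ : (c, γ) ∈ range w) => hγ
  refine ⟨⟨c, P, a, hP, ?_, fun γ hγ => ?_⟩⟩
  · exact LeftInvOn.injOn (f₁' := fun l => (w l).2) fun γ hγ => by simp [ha γ hγ.1]
  · have h := hw (a γ)
    have h0 : F empty c γ = false := by simpa using hγ.2
    rw [ha γ hγ.1] at h
    simpa [h0] using h

theorem exists_injective_forall_apply_eq_true {F : (ι → sigmaSet Λ (n + 1)) → κ → Γ → Bool}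
    (hF : Continuous F) (W : ∀ i, WitnessFamily F i) {r : ℕ} (e : Fin r → ι)
    (he : ∀ i, {j | e j = i}.ncard ≤ n + 1) {c : κ} (hc : ∀ j, (W (e j)).coord = c) :
    ∃ z, ∃ x : Fin r → Γ, Injective x ∧ ∀ j, F z c (x j) = true := by
  have hcyl := fun i γ => (show Continuous fun z => F z (W i).coord γ by fun_prop)
    |>.exists_finset_forall_apply_eq (single i ((W i).label γ))
  choose G hG using hcyl
  obtain ⟨x, hx, hxP, hfree⟩ := exists_injective_free_selection (fun j => (W (e j)).points)
    (fun j γ => (e j, (W (e j)).label γ)) (fun j => G (e j)) (fun j => (W (e j)).not_countable)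
    fun j => (Prod.mk_right_injective (e j)).comp_injOn (W (e j)).injOn_label
  let S := range fun j => (e j, (W (e j)).label (x j))
  have hS : ∀ i, {l | (i, l) ∈ S}.ncard ≤ n + 1 := fun i =>
    calc {l | (i, l) ∈ S}.ncard ≤ ((fun j => (W (e j)).label (x j)) '' {j | e j = i}).ncard := by
          refine ncard_le_ncard ?_ (toFinite _)
          rintro l ⟨j, hj⟩
          obtain ⟨rfl, rfl⟩ := Prod.ext_iff.1 hj
          exact ⟨j, rfl, rfl⟩
      _ ≤ {j | e j = i}.ncard := ncard_image_le (toFinite _)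
      _ ≤ n + 1 := he i
  refine ⟨ofSet S (finite_range _) hS, x, hx, fun t => ?_⟩
  rw [← hc t, hG _ _ _ fun p hp => ?_]
  · exact (W (e t)).apply_single _ (hxP t)
  rw [Bool.eq_iff_iff, ofSet_apply, single_apply]
  refine ⟨fun ⟨s, hs⟩ => ?_, fun h => ⟨t, h.symm⟩⟩
  simp only at hs
  by_contra hst
  exact hfree s t (fun h => hst (by rw [← hs, h])) (by rwa [hs])

variable {κ₀ κ₁ : Type*}

def toCube (y : (κ₀ → sigmaSet Γ n) × (κ₁ → sigmaSet Γ (n + 1))) : κ₀ ⊕ κ₁ → Γ → Bool :=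
  Sum.elim (fun m => y.1 m) (fun j => y.2 j)

theorem continuous_toCube :
    Continuous (toCube : (κ₀ → sigmaSet Γ n) × (κ₁ → sigmaSet Γ (n + 1)) → _) :=
  continuous_pi fun
    | .inl m => continuous_subtype_val.comp ((continuous_apply m).comp continuous_fst)
    | .inr j => continuous_subtype_val.comp ((continuous_apply j).comp continuous_snd)

theorem injective_toCube :
    Injective (toCube : (κ₀ → sigmaSet Γ n) × (κ₁ → sigmaSet Γ (n + 1)) → _) :=
  fun _ _ h => Prod.ext (funext fun m => Subtype.ext (congrFun h (.inl m)))
    (funext fun j => Subtype.ext (congrFun h (.inr j)))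

theorem not_injective_of_continuous [Uncountable Λ] [Fintype ι] [Countable κ₀] [Fintype κ₁]
    (hcard : Fintype.card κ₁ < Fintype.card ι)
    (f : (ι → sigmaSet Λ (n + 1)) → (κ₀ → sigmaSet Γ n) × (κ₁ → sigmaSet Γ (n + 1)))
    (hf : Continuous f) : ¬ Injective f := by
  intro hinj
  let F := toCube ∘ f
  have hF : Continuous F := continuous_toCube.comp hf
  have hfin : ∀ z c, {γ | F z c γ = true}.Finite := fun z c =>
    c.rec (fun m => ((f z).1 m).2.1) (fun j => ((f z).2 j).2.1)
  have W : ∀ i, WitnessFamily F i := fun i =>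
    (nonempty_witnessFamily hF (injective_toCube.comp hinj) hfin i).some
  by_cases hsmall : ∃ i m, (W i).coord = .inl m
  · obtain ⟨i, m, hm⟩ := hsmall
    obtain ⟨z, x, hx, hzx⟩ := exists_injective_forall_apply_eq_true hF W
      (fun _ : Fin (n + 1) => i) (fun _ => (ncard_le_card _).trans (by simp)) fun _ => hm
    have := card_le_of_forall_apply_eq_true ((f z).1 m).2 hx hzx
    omega
  · have hbig : ∀ i, ∃ j, (W i).coord = .inr j := fun i => by
      rcases h : (W i).coord with m | j
      exacts [absurd ⟨i, m, h⟩ hsmall, ⟨j, rfl⟩]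
    choose j hj using hbig
    obtain ⟨i, i', hii', hjj'⟩ := Fintype.exists_ne_map_eq_of_card_lt j hcard
    let e : Fin (n + 2) → ι := Fin.cons i fun _ => i'
    have he : ∀ i₀, {s | e s = i₀}.ncard ≤ n + 1 := fun i₀ => by
      refine Nat.lt_succ_iff.1 ((ncard_lt_card fun h => ?_).trans_eq (Nat.card_fin _))
      exact hii' ((eq_univ_iff_forall.1 h 0).trans (eq_univ_iff_forall.1 h 1).symm)
    obtain ⟨z, x, hx, hzx⟩ := exists_injective_forall_apply_eq_true hF W
      e he (c := .inr (j i)) (Fin.cases (hj i) fun _ => by simp [e, hj, hjj'])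
    have := card_le_of_forall_apply_eq_true ((f z).2 (j i)).2 hx hzx
    omega

end SigmaSet

/-- For uncountable `Λ` and `n, k ≥ 0`, the space `σ_{n+1}(Λ)^{k+1}` does not embed into
`σ_n(Γ)^ω × σ_{n+1}(Γ)^k`. -/
theorem stmt_7 (Λ : Type*) [Uncountable Λ] (Γ : Type*) (n k : ℕ) :
    ∀ f : (Fin (k + 1) → (sigmaSet Λ (n + 1))) →
          (ℕ → (sigmaSet Γ n)) × (Fin k → (sigmaSet Γ (n + 1))),
      Continuous f → ¬ Function.Injective f :=
  fun f hf => SigmaSet.not_injective_of_continuous (by simp) f hf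
end

section
/- Let Λ be uncountable, n, k ≥ 0, X = σ_{n+1}(Λ)^{k+1}, and for indices i ≠ i' in {0,…,k} let e_i^λ denote the point with {λ} in coordinate i and ∅ elsewhere. Suppose for every λ ∈ Λ we are given neighborhoods B_λ of e_i^λ and B'_λ of e_{i'}^λ. Then there exist λ_0 ∈ Λ and an infinite set S ⊆ Λ such that for every F ⊆ S with |F| = n+1, the intersection B_{λ_0} ∩ ⋂_{μ∈F} B'_μ is nonempty. -/
/-- The empty set as an element of `σ_m(Λ)`. -/
def emptyElt (Λ : Type*) (m : ℕ) : sigmaSet Λ m :=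
  ⟨fun _ => false, by simp [sigmaSet]⟩

/-- The singleton `{l}` as an element of `σ_{n+1}(Λ)`. -/
def singElt {Λ : Type*} [DecidableEq Λ] (n : ℕ) (l : Λ) : sigmaSet Λ (n + 1) := by
  refine ⟨fun γ => decide (γ = l), ?_⟩
  have h : {γ : Λ | decide (γ = l) = true} = {l} := by ext γ; simp
  constructor
  · rw [h]; exact Set.finite_singleton l
  · rw [h]; simp

/-- The point `e_i^λ` of `σ_{n+1}(Λ)^{k+1}`: singleton `{l}` in coordinate `i`, `∅` elsewhere. -/
def eElt {Λ : Type*} [DecidableEq Λ] (n k : ℕ) (i : Fin (k + 1)) (l : Λ) :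
    Fin (k + 1) → sigmaSet Λ (n + 1) :=
  fun j => if j = i then singElt n l else emptyElt Λ (n + 1)

open Set Filter Topology

theorem exists_finset_eqOn_subset_of_mem_nhds {Γ α : Type*} [TopologicalSpace α] {p : Γ → α}
    {U : Set (Γ → α)} (hU : U ∈ 𝓝 p) : ∃ T : Finset Γ, {x | EqOn x p T} ⊆ U := by
  obtain ⟨T, t, ht, hsub⟩ := Filter.mem_pi'.1 (nhds_pi (a := p) ▸ hU)
  exact ⟨T, fun x hx => hsub fun γ hγ => hx hγ ▸ mem_of_mem_nhds (ht γ)⟩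

theorem exists_finset_eqOn_subset_of_mem_nhds_pi_subtype {ι Γ α : Type*} [TopologicalSpace α]
    {s : ι → Set (Γ → α)} {p : ∀ j, s j} {U : Set (∀ j, s j)} (hU : U ∈ 𝓝 p) :
    ∃ T : Finset Γ, {x : ∀ j, s j | ∀ j, EqOn (x j : Γ → α) (p j) T} ⊆ U := by
  classical
  obtain ⟨I, t, ht, hsub⟩ := Filter.mem_pi'.1 (nhds_pi (a := p) ▸ hU)
  have hcoord : ∀ j, ∃ T : Finset Γ, {q : s j | EqOn (q : Γ → α) (p j) T} ⊆ t j := by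
    intro j
    obtain ⟨V, hV, hVt⟩ := Filter.mem_comap.1 (nhds_subtype (s j) (p j) ▸ ht j)
    obtain ⟨T, hT⟩ := exists_finset_eqOn_subset_of_mem_nhds hV
    exact ⟨T, fun q hq => hVt (hT hq)⟩
  choose T hT using hcoord
  refine ⟨I.biUnion T, fun x hx => hsub fun j hj => hT j ((hx j).mono ?_)⟩
  exact Finset.coe_subset.2 (Finset.subset_biUnion_of_mem T hj)

section FreeSet

variable {α : Type*} {A : Set α}

theorem exists_infinite_pairwise_notMem_of_countable_fibers (hA : ¬A.Countable)
    {t : α → Set α} (ht : ∀ a, (t a).Countable) (hfib : ∀ μ, {l ∈ A | μ ∈ t l}.Countable) :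
    ∃ S ⊆ A, S.Infinite ∧ S.Pairwise fun a b => a ∉ t b := by
  obtain ⟨M, hM⟩ := zorn_subset {S | S ⊆ A ∧ S.Pairwise fun a b => a ∉ t b}
    fun c hcS hc => ⟨⋃₀ c, ⟨sUnion_subset fun s hs => (hcS hs).1,
      (pairwise_sUnion hc.directedOn).2 fun s hs => (hcS hs).2⟩, fun _ => subset_sUnion_of_mem⟩
  refine ⟨M, hM.prop.1, fun hMfin => ?_, hM.prop.2⟩
  -- A finite maximal free set is blocked only by countably many points of `A`.
  set blocked := M ∪ (⋃ μ ∈ M, t μ) ∪ ⋃ μ ∈ M, {l ∈ A | μ ∈ t l}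
  have hblocked : blocked.Countable :=
    (hMfin.countable.union (hMfin.countable.biUnion fun μ _ => ht μ)).union
      (hMfin.countable.biUnion fun μ _ => hfib μ)
  obtain ⟨l, hlA, hl⟩ : (A \ blocked).Nonempty := by
    by_contra h
    exact hA ((not_nonempty_iff_eq_empty.1 h ▸ countable_empty).of_sdiff hblocked)
  simp only [blocked, mem_union, mem_iUnion₂, mem_sep_iff, not_or, not_exists, not_and] at hl
  refine hl.1.1 (hM.mem_of_prop_insert ⟨insert_subset hlA hM.prop.1, ?_⟩)
  exact pairwise_insert.2 ⟨hM.prop.2, fun μ hμ _ => ⟨hl.1.2 μ hμ, hl.2 μ hμ hlA⟩⟩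

theorem exists_infinite_pairwise_notMem_of_card_le (m : ℕ) (hA : ¬A.Countable)
    {t : α → Finset α} (ht : ∀ a ∈ A, (t a).card ≤ m) :
    ∃ S ⊆ A, S.Infinite ∧ S.Pairwise fun a b => a ∉ t b := by
  classical
  induction m generalizing A t with
  | zero =>
    refine exists_infinite_pairwise_notMem_of_countable_fibers hA (t := fun a => t a)
      (fun a => (t a).countable_toSet) fun μ => countable_empty.mono ?_
    rintro l ⟨hlA, hμ⟩
    simp [Finset.card_eq_zero.1 (Nat.le_zero.1 (ht l hlA))] at hμ
  | succ m ih =>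
    by_cases hfib : ∀ μ, {l ∈ A | μ ∈ t l}.Countable
    · exact exists_infinite_pairwise_notMem_of_countable_fibers hA (t := fun a => t a)
        (fun a => (t a).countable_toSet) hfib
    obtain ⟨μ, hμ⟩ := not_forall.1 hfib
    -- Inside the fibre of `μ`, discarding `μ` from every `t l` lowers the bound to `m`.
    have hfibμ : ¬({l ∈ A | μ ∈ t l} \ {μ}).Countable :=
      fun h => hμ (h.of_sdiff (countable_singleton μ))
    obtain ⟨S, hSA, hSinf, hS⟩ := ih hfibμ (t := fun l => (t l).erase μ) fun l hl => by
      rw [Finset.card_erase_of_mem hl.1.2]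
      exact Nat.sub_le_of_le_add (ht l hl.1.1)
    refine ⟨S, fun l hl => (hSA hl).1.1, hSinf, hS.imp_on fun a ha b _ _ hab hmem => ?_⟩
    exact hab (Finset.mem_erase.2 ⟨fun h => (hSA ha).2 h, hmem⟩)

theorem exists_infinite_pairwise_notMem [Uncountable α] (t : α → Finset α) :
    ∃ S : Set α, S.Infinite ∧ S.Pairwise fun a b => a ∉ t b := by
  obtain ⟨m, hm⟩ : ∃ m : ℕ, ¬{a | (t a).card ≤ m}.Countable := by
    by_contra! h
    refine not_countable (α := α) (countable_univ_iff.1 ((countable_iUnion h).mono ?_))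
    exact fun a _ => mem_iUnion.2 ⟨(t a).card, le_refl (t a).card⟩
  obtain ⟨S, -, hS⟩ := exists_infinite_pairwise_notMem_of_card_le m hm fun _ ha => ha
  exact ⟨S, hS⟩

end FreeSet

def sigmaSet.ofFinset_s9 {Λ : Type*} [DecidableEq Λ] {m : ℕ} (F : Finset Λ) (hF : F.card ≤ m) :
    sigmaSet Λ m :=
  ⟨fun γ => decide (γ ∈ F), by simpa [sigmaSet] using hF⟩

theorem eElt_apply_coe {Λ : Type*} [DecidableEq Λ] (n k : ℕ) (r j : Fin (k + 1)) (l γ : Λ) :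
    (eElt n k r l j : Λ → Bool) γ = decide (j = r ∧ γ = l) := by
  by_cases h : j = r <;> simp [eElt, singElt, emptyElt, h]

/-- Given neighborhoods `B_λ` of `e_i^λ` and `B'_λ` of `e_{i'}^λ` (`i ≠ i'`), there are
`λ₀` and an infinite `S ⊆ Λ` such that `B_{λ₀} ∩ ⋂_{μ ∈ F} B'_μ ≠ ∅` for every
`F ⊆ S` with `|F| = n+1`. -/
theorem stmt_9 (Λ : Type*) [Uncountable Λ] [DecidableEq Λ] (n k : ℕ)
    (i i' : Fin (k + 1)) (hii : i ≠ i')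
    (B B' : Λ → Set (Fin (k + 1) → sigmaSet Λ (n + 1)))
    (hB : ∀ l, B l ∈ nhds (eElt n k i l))
    (hB' : ∀ l, B' l ∈ nhds (eElt n k i' l)) :
    ∃ (l₀ : Λ) (S : Set Λ), S.Infinite ∧
      ∀ F : Finset Λ, ↑F ⊆ S → F.card = n + 1 →
        (B l₀ ∩ ⋂ μ ∈ F, B' μ).Nonempty := by
  choose T hT using fun l => exists_finset_eqOn_subset_of_mem_nhds_pi_subtype (hB l)
  choose T' hT' using fun l => exists_finset_eqOn_subset_of_mem_nhds_pi_subtype (hB' l)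
  obtain ⟨S₀, hS₀inf, hS₀⟩ := exists_infinite_pairwise_notMem T'
  obtain ⟨l₀, hl₀⟩ := hS₀inf.nonempty
  refine ⟨l₀, S₀ \ insert l₀ (T l₀), hS₀inf.sdiff ((T l₀).finite_toSet.insert l₀),
    fun F hFS hF => ?_⟩
  have hFS₀ : ∀ μ ∈ F, μ ∈ S₀ := fun μ hμ => (hFS hμ).1
  have hFT : ∀ μ ∈ F, μ ≠ l₀ ∧ μ ∉ T l₀ := fun μ hμ => by simpa using (hFS hμ).2
  -- the point `e_i^{l₀} ∪ ⋃_{μ ∈ F} e_{i'}^μ`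
  set x := Function.update (eElt n k i l₀) i' (sigmaSet.ofFinset_s9 F hF.le)
  refine ⟨x, hT l₀ fun j γ hγ => ?_, mem_iInter₂.2 fun μ hμ => hT' μ fun j γ hγ => ?_⟩
  · rcases eq_or_ne j i' with rfl | hj
    · simpa [x, sigmaSet.ofFinset_s9, eElt_apply_coe, hii.symm] using fun h => (hFT γ h).2 hγ
    · simp [x, hj]
  · rcases eq_or_ne j i' with rfl | hj
    · have hγF : γ ∈ F ↔ γ = μ :=
        ⟨fun h => by_contra fun hne => hS₀ (hFS₀ γ h) (hFS₀ μ hμ) hne hγ, fun h => h ▸ hμ⟩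
      simpa [x, sigmaSet.ofFinset_s9, eElt_apply_coe] using hγF
    · have hγl₀ : γ ≠ l₀ := fun h => hS₀ hl₀ (hFS₀ μ hμ) (hFT μ hμ).1.symm (h ▸ hγ)
      simp [x, hj, eElt_apply_coe, hγl₀]
end

section
/- If X is a compact space, C_1, …, C_t are open subsets of X, and σ_n(Λ)^k embeds topologically into C_1 ∪ ⋯ ∪ C_t, then σ_n(Λ)^k embeds into C_i for some i ≤ t. -/
open Function Set Topology

namespace sigmaSet

variable {Γ Δ : Type*} {n : ℕ}

lemma false_mem : (fun _ => false : Γ → Bool) ∈ sigmaSet Γ n := by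
  simp [sigmaSet]

lemma setOf_extend_eq_true (e : Γ ↪ Δ) (x : Γ → Bool) :
    {δ | extend e x (fun _ => false) δ = true} = e '' {γ | x γ = true} := by
  ext δ
  by_cases hδ : ∃ γ, e γ = δ
  · obtain ⟨γ, rfl⟩ := hδ
    simp [e.injective.extend_apply]
  · simp only [mem_ofPred_eq, extend_apply' _ _ _ hδ, Bool.false_eq_true, false_iff]
    rintro ⟨γ, -, rfl⟩
    exact hδ ⟨γ, rfl⟩

noncomputable def relabel (e : Γ ↪ Δ) (x : sigmaSet Γ n) : sigmaSet Δ n :=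
  ⟨extend e x (fun _ => false), by
    obtain ⟨hfin, hcard⟩ := x.2
    rw [sigmaSet, mem_ofPred_eq, setOf_extend_eq_true, ncard_image_of_injective _ e.injective]
    exact ⟨hfin.image e, hcard⟩⟩

lemma relabel_apply_embedding (e : Γ ↪ Δ) (x : sigmaSet Γ n) (γ : Γ) :
    (relabel e x : Δ → Bool) (e γ) = (x : Γ → Bool) γ :=
  e.injective.extend_apply (x : Γ → Bool) (fun _ => false) γ

lemma relabel_apply_of_notMem_range (e : Γ ↪ Δ) (x : sigmaSet Γ n) {δ : Δ}
    (hδ : δ ∉ range e) : (relabel e x : Δ → Bool) δ = false :=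
  extend_apply' (x : Γ → Bool) (fun _ => false) _ hδ

lemma relabel_injective (e : Γ ↪ Δ) : Injective (relabel (n := n) e) := fun x y hxy =>
  Subtype.ext <| funext fun γ => by
    rw [← relabel_apply_embedding e x, ← relabel_apply_embedding e y, hxy]

lemma continuous_relabel (e : Γ ↪ Δ) : Continuous (relabel (n := n) e) := by
  refine Continuous.subtype_mk (continuous_pi fun δ => ?_) _
  classical
  simp only [extend_def]
  split_ifs
  · exact (continuous_apply _).comp continuous_subtype_val
  · exact continuous_const

end sigmaSet

section Nhds

variable {Γ β ι : Type*} [TopologicalSpace β] {S : Set (Γ → β)}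

lemma exists_finite_forall_eqOn_mem_of_mem_nhds {p : S} {V : Set S} (hV : V ∈ 𝓝 p) :
    ∃ G : Set Γ, G.Finite ∧ ∀ x : S, EqOn (x : Γ → β) p G → x ∈ V := by
  rw [nhds_subtype, Filter.mem_comap] at hV
  obtain ⟨W, hW, hWV⟩ := hV
  rw [nhds_pi, Filter.mem_pi] at hW
  obtain ⟨G, hG, B, hB, hBW⟩ := hW
  refine ⟨G, hG, fun x hx => hWV (hBW fun γ hγ => ?_)⟩
  rw [hx hγ]
  exact mem_of_mem_nhds (hB γ)

lemma exists_finite_forall_eqOn_mem_of_mem_nhds_pi {p : ι → S} {U : Set (ι → S)}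
    (hU : U ∈ 𝓝 p) :
    ∃ G : Set Γ, G.Finite ∧ ∀ x : ι → S, (∀ j, EqOn (x j : Γ → β) (p j) G) → x ∈ U := by
  rw [nhds_pi, Filter.mem_pi] at hU
  obtain ⟨I, hI, V, hV, hVU⟩ := hU
  choose G hG hGV using fun j => exists_finite_forall_eqOn_mem_of_mem_nhds (hV j)
  refine ⟨⋃ j ∈ I, G j, hI.biUnion fun j _ => hG j, fun x hx => hVU fun j hj => hGV j (x j) ?_⟩
  exact (hx j).mono (subset_biUnion_of_mem hj)

end Nhds

lemma exists_embedding_forall_notMem {Λ : Type*} [Infinite Λ] {G : Set Λ} (hG : G.Finite) :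
    ∃ e : Λ ↪ Λ, ∀ γ, e γ ∉ G := by
  obtain ⟨eqv⟩ := Cardinal.eq.1 (Cardinal.mk_compl_of_infinite G
    (hG.lt_aleph0.trans_le (Cardinal.aleph0_le_mk Λ))).symm
  exact ⟨eqv.toEmbedding.trans (Embedding.subtype _), fun γ => (eqv γ).2⟩

theorem stmt_10_general (Λ : Type*) [Infinite Λ] (n k : ℕ)
    (X : Type*) [TopologicalSpace X]
    (t : ℕ) (C : Fin t → Set X) (hC : ∀ i, IsOpen (C i))
    (f : (Fin k → (sigmaSet Λ n)) → (⋃ i, C i : Set X))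
    (hfc : Continuous f) (hfi : Function.Injective f) :
    ∃ i, ∃ g : (Fin k → (sigmaSet Λ n)) → (C i : Set X),
      Continuous g ∧ Function.Injective g := by
  let x₀ : Fin k → sigmaSet Λ n := fun _ => ⟨fun _ => false, sigmaSet.false_mem⟩
  obtain ⟨i, hi⟩ := mem_iUnion.1 (f x₀).2
  have hU : f ⁻¹' (Subtype.val ⁻¹' C i) ∈ 𝓝 x₀ :=
    (((hC i).preimage continuous_subtype_val).preimage hfc).mem_nhds hi
  obtain ⟨G, hG, hGU⟩ := exists_finite_forall_eqOn_mem_of_mem_nhds_pi hU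
  obtain ⟨e, he⟩ := exists_embedding_forall_notMem hG
  let φ : (Fin k → sigmaSet Λ n) → (Fin k → sigmaSet Λ n) := fun x j => sigmaSet.relabel e (x j)
  have hmaps : ∀ x, (f (φ x) : X) ∈ C i := fun x => hGU (φ x) fun j γ hγ =>
    sigmaSet.relabel_apply_of_notMem_range e (x j) (by rintro ⟨γ', rfl⟩; exact he γ' hγ)
  refine ⟨i, codRestrict (fun x => (f (φ x) : X)) (C i) hmaps, ?_, ?_⟩
  · exact (continuous_subtype_val.comp (hfc.comp (continuous_pi fun j =>
      (sigmaSet.continuous_relabel e).comp (continuous_apply j)))).codRestrict hmaps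
  · refine Injective.codRestrict hmaps (Subtype.val_injective.comp (hfi.comp ?_))
    exact fun x y hxy => funext fun j => sigmaSet.relabel_injective e (congrFun hxy j)

/-- If `σ_n(Λ)^k` embeds into a finite union of open subsets of a compact space `X`,
then it embeds into one of them. -/
theorem stmt_10 (Λ : Type*) [Infinite Λ] (n k : ℕ)
    (X : Type*) [TopologicalSpace X] [CompactSpace X]
    (t : ℕ) (C : Fin t → Set X) (hC : ∀ i, IsOpen (C i))
    (f : (Fin k → (sigmaSet Λ n)) → (⋃ i, C i : Set X))
    (hfc : Continuous f) (hfi : Function.Injective f) :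
    ∃ i, ∃ g : (Fin k → (sigmaSet Λ n)) → (C i : Set X),
      Continuous g ∧ Function.Injective g :=
  stmt_10_general Λ n k X t C hC f hfc hfi
end

section
/- If a compact space expressed as σ_n(Λ)^k = C_1 ∪ ⋯ ∪ C_t with each C_i open, then some C_i contains a homeomorphic copy of σ_n(Λ)^k. -/
open Filter Topology Function

theorem exists_finset_forall_mem_of_mem_nhds_pi_discrete {ι : Type*} {X : ι → Type*}
    [∀ i, TopologicalSpace (X i)] [∀ i, DiscreteTopology (X i)] {p : ∀ i, X i}
    {s : Set (∀ i, X i)} (hs : s ∈ 𝓝 p) :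
    ∃ F : Finset ι, ∀ x : ∀ i, X i, (∀ i ∈ F, x i = p i) → x ∈ s := by
  rw [nhds_pi, mem_pi'] at hs
  obtain ⟨F, t, ht, hts⟩ := hs
  refine ⟨F, fun x hx => hts fun i hi => ?_⟩
  rw [hx i hi]
  exact mem_of_mem_nhds (ht i)

theorem exists_finset_forall_mem_of_mem_nhds_pi_subtype {ι κ : Type*} {X : ι → Type*}
    [∀ i, TopologicalSpace (X i)] [∀ i, DiscreteTopology (X i)] {S : Set (∀ i, X i)}
    {p : κ → S} {s : Set (κ → S)} (hs : s ∈ 𝓝 p) :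
    ∃ F : Finset ι, ∀ x : κ → S, (∀ j, ∀ i ∈ F, (x j : ∀ i, X i) i = (p j : ∀ i, X i) i) →
      x ∈ s := by
  classical
  rw [nhds_pi, mem_pi'] at hs
  obtain ⟨J, t, ht, hts⟩ := hs
  have hF : ∀ j, ∃ F : Finset ι, ∀ y : S, (∀ i ∈ F, (y : ∀ i, X i) i = (p j : ∀ i, X i) i) →
      y ∈ t j := fun j => by
    obtain ⟨u, hu, hut⟩ := (mem_nhds_subtype S (p j) (t j)).mp (ht j)
    obtain ⟨F, hF⟩ := exists_finset_forall_mem_of_mem_nhds_pi_discrete hu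
    exact ⟨F, fun y hy => hut (hF y hy)⟩
  choose F hF using hF
  exact ⟨J.biUnion F, fun x hx => hts fun j hj =>
    hF j (x j) fun i hi => hx j i (Finset.mem_biUnion.mpr ⟨j, hj, hi⟩)⟩

theorem continuous_extend {α β γ : Type*} [TopologicalSpace γ] (f : α → β) (e' : β → γ) :
    Continuous fun g : α → γ => extend f g e' := by
  classical
  refine continuous_pi fun b => ?_
  simp only [extend_def]
  split_ifs
  · exact continuous_apply _
  · exact continuous_const

theorem setOf_extend_false_eq_true {α β : Type*} {f : α → β} (hf : Injective f) (x : α → Bool) :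
    {b | extend f x (fun _ => false) b = true} = f '' {a | x a = true} := by
  ext b
  by_cases hb : ∃ a, f a = b
  · obtain ⟨a, rfl⟩ := hb
    simp [hf.extend_apply, hf.eq_iff]
  · simp only [Set.mem_ofPred_eq, extend_apply' _ _ _ hb, Set.mem_image]
    grind

theorem extend_false_mem_sigmaSet {α β : Type*} {f : α → β} (hf : Injective f) {n : ℕ}
    {x : α → Bool} (hx : x ∈ sigmaSet α n) : extend f x (fun _ => false) ∈ sigmaSet β n := by
  rw [sigmaSet, Set.mem_ofPred_eq, setOf_extend_false_eq_true hf,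
    Set.ncard_image_of_injective _ hf]
  exact ⟨hx.1.image f, hx.2⟩

theorem const_false_mem_sigmaSet (Γ : Type*) (n : ℕ) : (fun _ => false) ∈ sigmaSet Γ n := by
  simp [sigmaSet]

theorem Infinite.exists_injective_forall_notMem_finset {α : Type*} [Infinite α] (F : Finset α) :
    ∃ f : α → α, Injective f ∧ ∀ a, f a ∉ F := by
  obtain ⟨e⟩ : Nonempty (α ≃ ((F : Set α)ᶜ : Set α)) :=
    Cardinal.eq.mp (Cardinal.mk_compl_finset_of_infinite F).symm
  exact ⟨fun a => e a, Subtype.val_injective.comp e.injective, fun a => (e a).2⟩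

/-- If `σ_n(Λ)^k` is covered by finitely many open sets `C_1, …, C_t`, then some `C_i`
contains a homeomorphic copy of `σ_n(Λ)^k`. -/
theorem stmt_11 (Λ : Type*) [Infinite Λ] (n k : ℕ)
    (t : ℕ) (C : Fin t → Set (Fin k → (sigmaSet Λ n)))
    (hC : ∀ i, IsOpen (C i)) (hcover : (⋃ i, C i) = Set.univ) :
    ∃ i, ∃ g : (Fin k → (sigmaSet Λ n)) → (Fin k → (sigmaSet Λ n)),
      Continuous g ∧ Function.Injective g ∧ Set.range g ⊆ C i := by
  let z : Fin k → sigmaSet Λ n := fun _ => ⟨_, const_false_mem_sigmaSet Λ n⟩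
  obtain ⟨i, hi⟩ := Set.mem_iUnion.mp (hcover.symm ▸ Set.mem_univ z)
  obtain ⟨F, hF⟩ := exists_finset_forall_mem_of_mem_nhds_pi_subtype ((hC i).mem_nhds hi)
  obtain ⟨f, hf, hfF⟩ := Infinite.exists_injective_forall_notMem_finset F
  let Φ : sigmaSet Λ n → sigmaSet Λ n := fun x =>
    ⟨extend f x (fun _ => false), extend_false_mem_sigmaSet hf x.2⟩
  have hΦ : Continuous Φ :=
    ((continuous_extend f _).comp continuous_subtype_val).subtype_mk _
  refine ⟨i, fun x j => Φ (x j), continuous_pi fun j => hΦ.comp (continuous_apply j),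
    fun x y hxy => funext fun j => Subtype.val_injective ?_, ?_⟩
  · exact extend_injective hf _ (congrArg Subtype.val (congrFun hxy j))
  · rintro _ ⟨x, rfl⟩
    refine hF _ fun j γ hγ => ?_
    show extend f (x j) (fun _ => false) γ = false
    exact extend_apply' _ _ _ fun ⟨a, ha⟩ => hfF a (ha ▸ hγ)
end
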